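/- Assume the 'Fairness as Optimization' property: for all decisions d, d' on a sensitive group A, d <_f d' implies d <_u d'. Then every decision d that is Pareto maximal with respect to ≤_u on X restricts on each sensitive group A to a decision Pareto maximal with respect to ≤_f on A. -/

import Mathlib

open MeasureTheory Set

/-- A decision: a measurable map into the probability simplex. -/
def IsDecision {X : Type*} [MeasurableSpace X] (n : ℕ)
    (d : X → (Fin n → ℝ)) : Prop :=
  Measurable d ∧ ∀ x, d x ∈ stdSimplex ℝ (Fin n)

/-- The Pareto preorder on a measurable subset `S`, induced by `p`. -/
def ParetoLEOn {X : Type*} [MeasurableSpace X] (μ : Measure X) (n : ℕ)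
    (p : X → (Fin n → ℝ)) (S : Set X) (d d' : X → (Fin n → ℝ)) : Prop :=
  ∀ i : Fin n, ∫ x in S, d x i * p x i ∂μ ≤ ∫ x in S, d' x i * p x i ∂μ

/-- Strict Pareto domination on `S`. -/
def ParetoLTOn {X : Type*} [MeasurableSpace X] (μ : Measure X) (n : ℕ)
    (p : X → (Fin n → ℝ)) (S : Set X) (d d' : X → (Fin n → ℝ)) : Prop :=
  ParetoLEOn μ n p S d d' ∧ ¬ ParetoLEOn μ n p S d' d

/-- Pareto maximality on `S`. -/
def ParetoMaxOn {X : Type*} [MeasurableSpace X] (μ : Measure X) (n : ℕ)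
    (p : X → (Fin n → ℝ)) (S : Set X) (d : X → (Fin n → ℝ)) : Prop :=
  ∀ d' : X → (Fin n → ℝ), IsDecision n d' →
    ParetoLEOn μ n p S d d' → ParetoLEOn μ n p S d' d

/- If `d` were not `≤_f`-maximal on a group `A`, some decision `d'` would strictly
`≤_f`-dominate it on `A`, hence, by Fairness as Optimization, strictly `≤_u`-dominate it there.
The decision equal to `d'` on `A` and to `d` off `A` then has the same `pu`-weighted integrals as
`d` off `A`, so it strictly `≤_u`-dominates `d` on all of `X`, against maximality. -/

namespace IsDecision

variable {X : Type*} [MeasurableSpace X] {n : ℕ} {d d' : X → (Fin n → ℝ)}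

theorem piecewise {S : Set X} [DecidablePred (· ∈ S)] (hS : MeasurableSet S)
    (hd' : IsDecision n d') (hd : IsDecision n d) : IsDecision n (S.piecewise d' d) :=
  ⟨hd'.1.piecewise hS hd.1, fun x => by
    by_cases hx : x ∈ S
    · simpa [hx] using hd'.2 x
    · simpa [hx] using hd.2 x⟩

theorem integrable_mul_apply {μ : Measure X} [IsFiniteMeasure μ] {p : X → (Fin n → ℝ)}
    (hd : IsDecision n d) (hp : IsDecision n p) (i : Fin n) :
    Integrable (fun x => d x i * p x i) μ := by
  refine Integrable.of_mem_Icc 0 1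
    (((measurable_pi_apply i).comp hd.1).mul ((measurable_pi_apply i).comp hp.1)).aemeasurable
    (ae_of_all _ fun x => ?_)
  exact unitInterval.mul_mem (mem_Icc_of_mem_stdSimplex (hd.2 x) i)
    (mem_Icc_of_mem_stdSimplex (hp.2 x) i)

end IsDecision

section Piecewise

variable {X : Type*} [MeasurableSpace X] {μ : Measure X} {n : ℕ} {p : X → (Fin n → ℝ)}
  {S : Set X} [DecidablePred (· ∈ S)] {d d' : X → (Fin n → ℝ)}

theorem integral_piecewise_mul_apply (hS : MeasurableSet S) (i : Fin n)
    (hd' : Integrable (fun x => d' x i * p x i) μ) (hd : Integrable (fun x => d x i * p x i) μ) :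
    ∫ x, S.piecewise d' d x i * p x i ∂μ =
      (∫ x in S, d' x i * p x i ∂μ) + ∫ x in Sᶜ, d x i * p x i ∂μ := by
  have hfun : (fun x => S.piecewise d' d x i * p x i) =
      S.piecewise (fun x => d' x i * p x i) (fun x => d x i * p x i) := by
    ext x
    by_cases hx : x ∈ S <;> simp [hx]
  rw [hfun, integral_piecewise hS hd'.integrableOn hd.integrableOn]

theorem paretoLEOn_univ_piecewise_iff (hS : MeasurableSet S)
    (hd' : ∀ i, Integrable (fun x => d' x i * p x i) μ)
    (hd : ∀ i, Integrable (fun x => d x i * p x i) μ) :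
    ParetoLEOn μ n p univ d (S.piecewise d' d) ↔ ParetoLEOn μ n p S d d' := by
  refine forall_congr' fun i => ?_
  rw [setIntegral_univ, setIntegral_univ, integral_piecewise_mul_apply hS i (hd' i) (hd i),
    ← integral_add_compl hS (hd i), add_le_add_iff_right]

theorem paretoLEOn_univ_piecewise_left_iff (hS : MeasurableSet S)
    (hd' : ∀ i, Integrable (fun x => d' x i * p x i) μ)
    (hd : ∀ i, Integrable (fun x => d x i * p x i) μ) :
    ParetoLEOn μ n p univ (S.piecewise d' d) d ↔ ParetoLEOn μ n p S d' d := by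
  refine forall_congr' fun i => ?_
  rw [setIntegral_univ, setIntegral_univ, integral_piecewise_mul_apply hS i (hd' i) (hd i),
    ← integral_add_compl hS (hd i), add_le_add_iff_right]

end Piecewise

section Maximality

variable {X : Type*} [MeasurableSpace X] {μ : Measure X} {n : ℕ} {p : X → (Fin n → ℝ)}
  {S : Set X} {d d' : X → (Fin n → ℝ)}

theorem ParetoMaxOn.not_paretoLTOn (hmax : ParetoMaxOn μ n p S d) (hd' : IsDecision n d') :
    ¬ ParetoLTOn μ n p S d d' :=
  fun hlt => hlt.2 (hmax d' hd' hlt.1)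

theorem ParetoMaxOn.of_univ [IsFiniteMeasure μ] (hp : IsDecision n p) (hS : MeasurableSet S)
    (hd : IsDecision n d) (hmax : ParetoMaxOn μ n p univ d) : ParetoMaxOn μ n p S d := by
  classical
  intro d' hd' hle
  have hint : ∀ {e}, IsDecision n e → ∀ i, Integrable (fun x => e x i * p x i) μ :=
    fun he i => he.integrable_mul_apply hp i
  have hle_univ : ParetoLEOn μ n p univ d (S.piecewise d' d) :=
    (paretoLEOn_univ_piecewise_iff hS (hint hd') (hint hd)).2 hle
  exact (paretoLEOn_univ_piecewise_left_iff hS (hint hd') (hint hd)).1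
    (hmax _ (hd'.piecewise hS hd) hle_univ)

end Maximality

theorem fairness_as_optimization_implies_double_standard_general {X : Type*} [MeasurableSpace X]
    (μ : Measure X) [IsProbabilityMeasure μ] (n m : ℕ)
    (pu pf : X → (Fin n → ℝ)) (hpu : Measurable pu)
    (hpumem : ∀ x, pu x ∈ stdSimplex ℝ (Fin n))
    (A : Fin m → Set X) (hAmeas : ∀ k, MeasurableSet (A k))
    (hFaO : ∀ k : Fin m, ∀ d d' : X → (Fin n → ℝ), IsDecision n d →
      IsDecision n d' → ParetoLTOn μ n pf (A k) d d' → ParetoLTOn μ n pu (A k) d d')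
    (d : X → (Fin n → ℝ)) (hd : IsDecision n d)
    (hmax : ParetoMaxOn μ n pu univ d) :
    ∀ k : Fin m, ParetoMaxOn μ n pf (A k) d := by
  intro k d' hd' hle
  by_contra hnot
  have hmax_k : ParetoMaxOn μ n pu (A k) d := hmax.of_univ ⟨hpu, hpumem⟩ (hAmeas k) hd
  exact hmax_k.not_paretoLTOn hd' (hFaO k d d' hd hd' ⟨hle, hnot⟩)

/-- "Fairness as Optimization ⇒ Double Standard": under the Fairness as
Optimization assumption, every decision Pareto maximal for `≤_u` on `X`
restricts on each sensitive group to a decision Pareto maximal for `≤_f`. -/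
theorem fairness_as_optimization_implies_double_standard {X : Type*} [MeasurableSpace X]
    (μ : Measure X) [IsProbabilityMeasure μ] (n m : ℕ)
    (pu pf : X → (Fin n → ℝ)) (hpu : Measurable pu) (hpf : Measurable pf)
    (hpumem : ∀ x, pu x ∈ stdSimplex ℝ (Fin n))
    (hpfmem : ∀ x, pf x ∈ stdSimplex ℝ (Fin n))
    (A : Fin m → Set X) (hAmeas : ∀ k, MeasurableSet (A k))
    (hAcover : (⋃ k, A k) = univ)
    (hAdisj : Pairwise (Function.onFun Disjoint A))
    (hApos : ∀ k, 0 < μ (A k))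
    (hFaO : ∀ k : Fin m, ∀ d d' : X → (Fin n → ℝ), IsDecision n d →
      IsDecision n d' → ParetoLTOn μ n pf (A k) d d' → ParetoLTOn μ n pu (A k) d d')
    (d : X → (Fin n → ℝ)) (hd : IsDecision n d)
    (hmax : ParetoMaxOn μ n pu univ d) :
    ∀ k : Fin m, ParetoMaxOn μ n pf (A k) d :=
  fairness_as_optimization_implies_double_standard_general μ n m pu pf hpu hpumem A hAmeas hFaO d hd
    hmax
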